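/- Let 1 ≤ k < n be integers and let A be any (deterministic) real m×n matrix. If Aw ≠ 0 for every w ∈ S_str(n,k), then for every x ∈ ℝ^n with at most k nonzero entries, x is the unique solution of the optimization problem: minimize ‖z‖₁ subject to Az = Ax. -/
import Mathlib


/-- `Sstr n k`: unit-norm vectors `w` in `ℝ^n` for which there is a sign pattern
`b ∈ {−1,1}^n` with `∑ b i = n − 2k` and `∑ b i * |w i| ≤ 0`. -/
def Sstr (n k : ℕ) : Set (Fin n → ℝ) :=
  {w | ∑ i, (w i) ^ 2 = 1 ∧
    ∃ b : Fin n → ℝ, (∀ i, b i = 1 ∨ b i = -1) ∧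
      (∑ i, b i) = (n : ℝ) - 2 * k ∧ ∑ i, b i * |w i| ≤ 0}

/-- `x` is the unique minimizer of `‖z‖₁` subject to `Az = Ax`. -/
def UniqueL1Min {m n : ℕ} (A : Fin m → Fin n → ℝ) (x : Fin n → ℝ) : Prop :=
  ∀ z : Fin n → ℝ, (∀ i, ∑ j, A i j * z j = ∑ j, A i j * x j) → z ≠ x →
    ∑ i, |x i| < ∑ i, |z i|

theorem strong_nullspace_condition (m n k : ℕ) (hk : 1 ≤ k) (hkn : k < n)
    (A : Fin m → Fin n → ℝ)
    (hA : ∀ w ∈ Sstr n k, (fun i => ∑ j, A i j * w j) ≠ (0 : Fin m → ℝ)) :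
    ∀ x : Fin n → ℝ, (∃ K : Finset (Fin n), K.card ≤ k ∧ ∀ i ∉ K, x i = 0) →
      UniqueL1Min A x := by
  rintro x ⟨K, hKcard, hx0⟩ z hz hne
  by_contra hcon
  push_neg at hcon
  set h : Fin n → ℝ := fun i => z i - x i with hh
  have hhne : ∃ i, h i ≠ 0 := by
    by_contra hc; push_neg at hc
    exact hne (funext fun i => by have := hc i; simp only [hh] at this; linarith)
  obtain ⟨i0, hi0⟩ := hhne
  have hs : 0 < ∑ i, h i ^ 2 := by
    have h1 : 0 < h i0 ^ 2 := by positivity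
    exact lt_of_lt_of_le h1
      (Finset.single_le_sum (f := fun i => h i ^ 2) (fun i _ => sq_nonneg _)
        (Finset.mem_univ i0))
  set c := Real.sqrt (∑ i, h i ^ 2) with hcdef
  have hcpos : 0 < c := Real.sqrt_pos.2 hs
  have hc2 : c ^ 2 = ∑ i, h i ^ 2 := Real.sq_sqrt hs.le
  set w : Fin n → ℝ := fun i => h i / c with hw
  obtain ⟨T, hKT, hTcard⟩ := Finset.exists_superset_card_eq hKcard
    (by simpa using hkn.le)
  -- key inequality
  have hsub : Finset.univ \ T ⊆ Finset.univ \ K := by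
    intro i hi
    simp only [Finset.mem_sdiff, Finset.mem_univ, true_and] at hi ⊢
    exact fun hiK => hi (hKT hiK)
  have step1 : ∑ i ∈ Finset.univ \ T, |h i| ≤ ∑ i ∈ Finset.univ \ K, |h i| :=
    Finset.sum_le_sum_of_subset_of_nonneg hsub (fun i _ _ => abs_nonneg _)
  have step2 : ∑ i ∈ Finset.univ \ K, |h i| = ∑ i ∈ Finset.univ \ K, |z i| := by
    apply Finset.sum_congr rfl
    intro i hi
    simp only [Finset.mem_sdiff, Finset.mem_univ, true_and] at hi
    simp [hh, hx0 i hi]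
  have hxK : ∑ i, |x i| = ∑ i ∈ K, |x i| := by
    symm
    apply Finset.sum_subset (Finset.subset_univ K)
    intro i _ hi
    simp [hx0 i hi]
  have hzsplit : ∑ i ∈ Finset.univ \ K, |z i| + ∑ i ∈ K, |z i| = ∑ i, |z i| :=
    Finset.sum_sdiff (Finset.subset_univ K)
  have step4 : ∑ i ∈ K, |x i| - ∑ i ∈ K, |z i| ≤ ∑ i ∈ K, |h i| := by
    rw [← Finset.sum_sub_distrib]
    apply Finset.sum_le_sum
    intro i _
    have := abs_sub_abs_le_abs_sub (x i) (z i)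
    have h2 : |x i - z i| = |h i| := by rw [hh]; simp; rw [abs_sub_comm]
    linarith
  have step5 : ∑ i ∈ K, |h i| ≤ ∑ i ∈ T, |h i| :=
    Finset.sum_le_sum_of_subset_of_nonneg hKT (fun i _ _ => abs_nonneg _)
  have key : ∑ i ∈ Finset.univ \ T, |h i| ≤ ∑ i ∈ T, |h i| := by
    linarith
  -- w is in Sstr
  have hwS : w ∈ Sstr n k := by
    constructor
    · have : ∑ i, w i ^ 2 = (∑ i, h i ^ 2) / c ^ 2 := by
        rw [Finset.sum_div]
        exact Finset.sum_congr rfl fun i _ => by rw [hw]; ring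
      rw [this, ← hc2, div_self (by positivity)]
    · refine ⟨fun i => if i ∈ T then -1 else 1,
        fun i => by by_cases hi : i ∈ T <;> simp [hi], ?_, ?_⟩
      · have h1 : ∑ i ∈ Finset.univ \ T, (if i ∈ T then (-1 : ℝ) else 1)
            = ((Finset.univ \ T).card : ℝ) := by
          have hcg : ∀ i ∈ Finset.univ \ T, (if i ∈ T then (-1 : ℝ) else 1) = 1 := by
            intro i hi
            simp only [Finset.mem_sdiff] at hi
            simp [hi.2]
          rw [Finset.sum_congr rfl hcg, Finset.sum_const, nsmul_eq_mul, mul_one]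
        have h2 : ∑ i ∈ T, (if i ∈ T then (-1 : ℝ) else 1) = -(T.card : ℝ) := by
          have hcg : ∀ i ∈ T, (if i ∈ T then (-1 : ℝ) else 1) = -1 := by
            intro i hi; simp [hi]
          rw [Finset.sum_congr rfl hcg, Finset.sum_const, nsmul_eq_mul, mul_neg_one]
        rw [← Finset.sum_sdiff (Finset.subset_univ T), h1, h2,
          Finset.card_sdiff_of_subset (Finset.subset_univ T), Finset.card_univ, Fintype.card_fin,
          hTcard, Nat.cast_sub hkn.le]
        ring
      · have habs : ∀ i, |w i| = |h i| / c := fun i => by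
          rw [hw]; simp [abs_div, abs_of_pos hcpos]
        have e1 : ∑ i ∈ Finset.univ \ T, (if i ∈ T then (-1 : ℝ) else 1) * |w i|
            = (∑ i ∈ Finset.univ \ T, |h i|) / c := by
          rw [Finset.sum_div]
          refine Finset.sum_congr rfl fun i hi => ?_
          simp only [Finset.mem_sdiff] at hi
          rw [habs i]; simp [hi.2]
        have e2 : ∑ i ∈ T, (if i ∈ T then (-1 : ℝ) else 1) * |w i|
            = -((∑ i ∈ T, |h i|) / c) := by
          rw [Finset.sum_div, ← Finset.sum_neg_distrib]
          refine Finset.sum_congr rfl fun i hi => ?_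
          rw [habs i]; simp [hi]
        have esum : ∑ i, (if i ∈ T then (-1 : ℝ) else 1) * |w i|
            = ((∑ i ∈ Finset.univ \ T, |h i|) - ∑ i ∈ T, |h i|) / c := by
          rw [← Finset.sum_sdiff (Finset.subset_univ T), e1, e2]; ring
        rw [esum]
        apply div_nonpos_of_nonpos_of_nonneg _ hcpos.le
        linarith
  apply hA w hwS
  funext i
  have hAh : ∑ j, A i j * h j = 0 := by
    have : ∑ j, A i j * h j = ∑ j, A i j * z j - ∑ j, A i j * x j := by
      rw [← Finset.sum_sub_distrib]
      exact Finset.sum_congr rfl fun j _ => by rw [hh]; ring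
    rw [this, hz i, sub_self]
  have : ∑ j, A i j * w j = (∑ j, A i j * h j) / c := by
    rw [Finset.sum_div]
    exact Finset.sum_congr rfl fun j _ => by rw [hw]; ring
  simp [this, hAh]
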